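/- arXiv:2111.01030 — 6 statements merged into one kernel-verified Lean document; each statement's English description precedes it below -/
import Mathlib

section
/- Let λ ≥ 1 be an integer, k = 2(λ+1), q ≥ 1, and f ∈ Lᵠ(ℝ). Let v, ξ : ℝ → ℝ be measurable functions such that |v(Y)| ≤ 3π/2 for a.e. Y, ‖v‖_{L²(ℝ)} ≤ B, and C⁻ ≤ ξ(Y) ≤ C⁺ for a.e. Y, where B, C⁻, C⁺ are positive constants. Define (Λf)(Y) := ∫_ℝ exp( −| ∫_Y^{Y'} cos^k(v(s)/2)·ξ(s) ds | ) f(Y') dY'. Then ‖Λf‖_{Lᵠ(ℝ)} ≤ ‖g‖_{L¹(ℝ)} · ‖f‖_{Lᵠ(ℝ)}, where g(z) := min{ 1, exp( (C⁻/2^{λ+1})·( (9/2)B² − |z| ) ) }, and moreover ‖g‖_{L¹(ℝ)} = 9B² + 2^{λ+2}/C⁻. -/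
/-!
By Chebyshev, `|v| < 1` outside a set of measure at most `B²`; there `cos² (v/2) ≥ 1/2`, so the
exponent `∫_Y^{Y'} cos^k (v/2) ξ` grows at least like `(C⁻ / 2^(λ+1)) (|Y' - Y| - B²)`.
Hence the kernel `exp (-|∫_Y^{Y'} …|)` is dominated by the translation kernel `g (Y - Y')`, and
Young's inequality `‖g * F‖_q ≤ ‖g‖₁ ‖F‖_q` (Hölder against the measure `g (x - y) dy`, then
Tonelli) gives the bound. The value of `‖g‖₁` is an elementary integral: `g = 1` on
`|z| ≤ (9/2) B²` and decays exponentially beyond.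
-/

open MeasureTheory ENNReal Set

section Young

theorem rpow_lintegral_mul_le {α : Type*} [MeasurableSpace α] {μ : Measure α}
    {k F : α → ℝ≥0∞} (hk : AEMeasurable k μ) (hF : AEMeasurable F μ) {q : ℝ} (hq : 1 ≤ q) :
    (∫⁻ y, k y * F y ∂μ) ^ q ≤ (∫⁻ y, k y ∂μ) ^ (q - 1) * ∫⁻ y, k y * F y ^ q ∂μ := by
  have hq0 : 0 < q := zero_lt_one.trans_le hq
  have hexp : 0 ≤ 1 - 1 / q := sub_nonneg.2 ((div_le_one hq0).2 hq)
  -- Hölder with exponents `q / (q - 1)` and `q`, after splitting `k = k ^ (1 - 1/q) * k ^ (1/q)`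
  have hholder := ENNReal.lintegral_mul_norm_pow_le hk (hk.mul (hF.pow_const q)) hexp
    (by positivity) (sub_add_cancel 1 (1 / q))
  have hsplit : ∀ y, k y ^ (1 - 1 / q) * (k y * F y ^ q) ^ (1 / q) = k y * F y := fun y => by
    rw [mul_rpow_of_nonneg _ _ (by positivity), ← rpow_mul, mul_one_div_cancel hq0.ne', rpow_one,
      ← mul_assoc, ← rpow_add_of_nonneg _ _ hexp (by positivity), sub_add_cancel, rpow_one]
  simp only [Pi.mul_apply, hsplit] at hholder
  calc (∫⁻ y, k y * F y ∂μ) ^ q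
      ≤ ((∫⁻ y, k y ∂μ) ^ (1 - 1 / q) * (∫⁻ y, k y * F y ^ q ∂μ) ^ (1 / q)) ^ q :=
        rpow_le_rpow hholder hq0.le
    _ = (∫⁻ y, k y ∂μ) ^ (q - 1) * ∫⁻ y, k y * F y ^ q ∂μ := by
        rw [mul_rpow_of_nonneg _ _ hq0.le, ← rpow_mul, ← rpow_mul, one_div_mul_cancel hq0.ne',
          rpow_one, sub_mul, one_div_mul_cancel hq0.ne', one_mul]

variable {G : Type*} [MeasurableSpace G] [AddCommGroup G] [MeasurableAdd₂ G] [MeasurableNeg G]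
  {μ : Measure G} [SFinite μ] [μ.IsAddLeftInvariant] [μ.IsNegInvariant]

theorem lintegral_rpow_lintegral_sub_mul_le {k F : G → ℝ≥0∞} (hk : Measurable k)
    (hF : AEMeasurable F μ) {q : ℝ} (hq : 1 ≤ q) :
    ∫⁻ x, (∫⁻ y, k (x - y) * F y ∂μ) ^ q ∂μ ≤ (∫⁻ z, k z ∂μ) ^ q * ∫⁻ y, F y ^ q ∂μ := by
  have hprod : AEMeasurable (Function.uncurry fun x y => k (x - y) * F y ^ q) (μ.prod μ) :=
    (hk.comp measurable_sub).aemeasurable.mul (hF.pow_const q).comp_snd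
  have hinner : AEMeasurable (fun x => ∫⁻ y, k (x - y) * F y ^ q ∂μ) μ :=
    hprod.lintegral_prod_right'
  calc ∫⁻ x, (∫⁻ y, k (x - y) * F y ∂μ) ^ q ∂μ
      ≤ ∫⁻ x, (∫⁻ z, k z ∂μ) ^ (q - 1) * (∫⁻ y, k (x - y) * F y ^ q ∂μ) ∂μ := by
        refine lintegral_mono fun x => ?_
        rw [← lintegral_sub_left_eq_self k x]
        exact rpow_lintegral_mul_le (by fun_prop) hF hq
    _ = (∫⁻ z, k z ∂μ) ^ (q - 1) * ∫⁻ y, (∫⁻ z, k z ∂μ) * F y ^ q ∂μ := by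
        rw [lintegral_const_mul'' _ hinner, lintegral_lintegral_swap hprod]
        congr 1
        refine lintegral_congr fun y => ?_
        rw [lintegral_mul_const (f := fun x => k (x - y)) _ (by fun_prop),
          lintegral_sub_right_eq_self]
    _ = (∫⁻ z, k z ∂μ) ^ q * ∫⁻ y, F y ^ q ∂μ := by
        rw [lintegral_const_mul'' _ (hF.pow_const q), ← mul_assoc]
        congr 1
        conv_rhs => rw [← sub_add_cancel q 1, rpow_add_of_nonneg _ _ (by linarith) zero_le_one]
        rw [rpow_one]

theorem eLpNorm_lintegral_sub_mul_le {k F : G → ℝ≥0∞} (hk : Measurable k)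
    (hF : AEMeasurable F μ) {p : ℝ≥0∞} (hp : 1 ≤ p) (hp_top : p ≠ ∞) :
    eLpNorm (fun x => ∫⁻ y, k (x - y) * F y ∂μ) p μ ≤ (∫⁻ z, k z ∂μ) * eLpNorm F p μ := by
  have hp0 : p ≠ 0 := (zero_lt_one.trans_le hp).ne'
  have hq : 1 ≤ p.toReal := by simpa using toReal_mono hp_top hp
  have hq0 : 0 < p.toReal := zero_lt_one.trans_le hq
  simp only [eLpNorm_eq_lintegral_rpow_enorm_toReal hp0 hp_top, enorm_eq_self]
  calc (∫⁻ x, (∫⁻ y, k (x - y) * F y ∂μ) ^ p.toReal ∂μ) ^ (1 / p.toReal)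
      ≤ ((∫⁻ z, k z ∂μ) ^ p.toReal * ∫⁻ y, F y ^ p.toReal ∂μ) ^ (1 / p.toReal) :=
        rpow_le_rpow (lintegral_rpow_lintegral_sub_mul_le hk hF hq) (by positivity)
    _ = (∫⁻ z, k z ∂μ) * (∫⁻ y, F y ^ p.toReal ∂μ) ^ (1 / p.toReal) := by
        rw [mul_rpow_of_nonneg _ _ (by positivity), ← rpow_mul, mul_one_div_cancel hq0.ne',
          rpow_one]

theorem eLpNorm_integral_mul_le_of_abs_le {K : G → G → ℝ} {g f : G → ℝ} (hg : Integrable g μ)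
    (hg_meas : Measurable g) (hK : ∀ x y, |K x y| ≤ g (x - y)) (hf : AEStronglyMeasurable f μ)
    {p : ℝ≥0∞} (hp : 1 ≤ p) (hp_top : p ≠ ∞) :
    eLpNorm (fun x => ∫ y, K x y * f y ∂μ) p μ ≤ ENNReal.ofReal (∫ z, g z ∂μ) * eLpNorm f p μ := by
  have hg0 : ∀ z, 0 ≤ g z := fun z => by simpa using (abs_nonneg _).trans (hK z 0)
  calc eLpNorm (fun x => ∫ y, K x y * f y ∂μ) p μ
      ≤ eLpNorm (fun x => ∫⁻ y, ENNReal.ofReal (g (x - y)) * ‖f y‖ₑ ∂μ) p μ := by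
        refine eLpNorm_mono_enorm fun x => (enorm_integral_le_lintegral_enorm _).trans ?_
        rw [enorm_eq_self]
        refine lintegral_mono fun y => ?_
        rw [enorm_mul, Real.enorm_eq_ofReal_abs]
        gcongr
        exact hK x y
    _ ≤ (∫⁻ z, ENNReal.ofReal (g z) ∂μ) * eLpNorm (fun y => ‖f y‖ₑ) p μ :=
        eLpNorm_lintegral_sub_mul_le hg_meas.ennreal_ofReal hf.enorm hp hp_top
    _ = ENNReal.ofReal (∫ z, g z ∂μ) * eLpNorm f p μ := by
        rw [eLpNorm_enorm, ofReal_integral_eq_lintegral_ofReal hg (ae_of_all _ hg0)]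

end Young

section Profile

open Real

theorem integrable_comp_abs_of_integrableOn_Ioi {f : ℝ → ℝ} (hf : IntegrableOn f (Ioi 0)) :
    Integrable fun x => f |x| := by
  have hIoi : IntegrableOn (fun x => f |x|) (Ioi 0) :=
    hf.congr_fun (fun x hx => by rw [abs_of_pos (mem_Ioi.1 hx)]) measurableSet_Ioi
  have hIic : IntegrableOn (fun x => f |x|) (Iic 0) := by
    have hneg : MeasurableEmbedding (Neg.neg : ℝ → ℝ) := (Homeomorph.neg ℝ).measurableEmbedding
    rw [← Measure.map_neg_eq_self (volume : Measure ℝ), hneg.integrableOn_map_iff]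
    simpa [Function.comp_def, abs_neg] using
      (integrableOn_Ici_iff_integrableOn_Ioi (by simp)).2 hIoi
  rw [← integrableOn_univ, ← Iic_union_Ioi (a := (0 : ℝ))]
  exact hIic.union hIoi

variable {c a : ℝ}

theorem integrableOn_min_one_exp_mul_sub (hc : 0 < c) :
    IntegrableOn (fun t => min 1 (exp (c * (a - t)))) (Ioi 0) := by
  refine ((exp_neg_integrableOn_Ioi 0 hc).const_mul (exp (c * a))).mono'
    (by fun_prop) (ae_of_all _ fun t => ?_)
  rw [norm_of_nonneg (le_min zero_le_one (exp_pos _).le), ← exp_add]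
  exact (min_le_right _ _).trans_eq (by ring_nf)

theorem setIntegral_Ioi_min_one_exp_mul_sub (hc : 0 < c) (ha : 0 ≤ a) :
    ∫ t in Ioi 0, min 1 (exp (c * (a - t))) = a + 1 / c := by
  have hint := integrableOn_min_one_exp_mul_sub (a := a) hc
  rw [← Ioc_union_Ioi_eq_Ioi ha, setIntegral_union (Ioc_disjoint_Ioi le_rfl) measurableSet_Ioi
    (hint.mono_set Ioc_subset_Ioi_self) (hint.mono_set (Ioi_subset_Ioi ha))]
  have hnear : ∫ t in Ioc 0 a, min 1 (exp (c * (a - t))) = a := by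
    rw [setIntegral_congr_fun measurableSet_Ioc (g := fun _ => 1)
      fun t ht => min_eq_left (one_le_exp (mul_nonneg hc.le (sub_nonneg.2 ht.2)))]
    simp [ha]
  have hfar : ∫ t in Ioi a, min 1 (exp (c * (a - t))) = 1 / c := by
    rw [setIntegral_congr_fun measurableSet_Ioi (g := fun t => exp (c * a) * exp (-c * t))
      fun t ht => by
        rw [min_eq_right (exp_le_one_iff.2 (mul_nonpos_of_nonneg_of_nonpos hc.le
          (sub_nonpos.2 (le_of_lt ht))))]
        simp only [← exp_add]
        ring_nf,
      integral_const_mul, integral_exp_mul_Ioi (neg_lt_zero.2 hc), neg_div_neg_eq,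
      ← mul_div_assoc, ← exp_add, neg_mul, add_neg_cancel, exp_zero]
  rw [hnear, hfar]

theorem integrable_min_one_exp_mul_sub_abs (hc : 0 < c) :
    Integrable fun z => min 1 (exp (c * (a - |z|))) :=
  integrable_comp_abs_of_integrableOn_Ioi (integrableOn_min_one_exp_mul_sub hc)

theorem integral_min_one_exp_mul_sub_abs (hc : 0 < c) (ha : 0 ≤ a) :
    ∫ z, min 1 (exp (c * (a - |z|))) = 2 * a + 2 / c := by
  rw [integral_comp_abs (f := fun t => min 1 (exp (c * (a - t)))),
    setIntegral_Ioi_min_one_exp_mul_sub hc ha]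
  ring

end Profile

section LowerBound

open Real

theorem measure_one_le_abs_le_ofReal_sq {α : Type*} [MeasurableSpace α] {μ : Measure α}
    {v : α → ℝ} (hv : AEStronglyMeasurable v μ) {B : ℝ} (hB : eLpNorm v 2 μ ≤ ENNReal.ofReal B) :
    μ {x | 1 ≤ |v x|} ≤ ENNReal.ofReal (B ^ 2) := by
  have hcheb := meas_ge_le_mul_pow_eLpNorm_enorm μ two_ne_zero ofNat_ne_top hv one_ne_zero
    (by simp)
  simp only [inv_one, toReal_ofNat, ENNReal.rpow_two, one_pow, one_mul,
    Real.enorm_eq_ofReal_abs, one_le_ofReal] at hcheb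
  calc μ {x | 1 ≤ |v x|} ≤ eLpNorm v 2 μ ^ 2 := hcheb
    _ ≤ ENNReal.ofReal |B| ^ 2 := by gcongr; exact hB.trans (ofReal_le_ofReal (le_abs_self B))
    _ = ENNReal.ofReal (B ^ 2) := by rw [← ofReal_pow (abs_nonneg B), sq_abs]

theorem mul_sub_le_setIntegral_Ioc {h : ℝ → ℝ} {E : Set ℝ} {c m : ℝ}
    (hh : LocallyIntegrable h) (h_nonneg : ∀ᵐ s, 0 ≤ h s) (hc : 0 ≤ c)
    (h_lower : ∀ᵐ s, s ∉ E → c ≤ h s) (hE : MeasurableSet E)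
    (hE_vol : volume E ≤ ENNReal.ofReal m) (hm : 0 ≤ m) (a b : ℝ) :
    c * ((b - a) - m) ≤ ∫ s in Ioc a b, h s := by
  have hint : IntegrableOn h (Ioc a b) :=
    (hh.integrableOn_isCompact isCompact_Icc).mono_set Ioc_subset_Icc_self
  have hvol : (b - a) - m ≤ volume.real (Ioc a b \ E) := by
    have hE_real : volume.real E ≤ m := toReal_le_of_le_ofReal hm hE_vol
    have hsdiff := le_measureReal_sdiff (s₁ := Ioc a b) (hE_vol.trans_lt ofReal_lt_top).ne
    rw [Real.volume_real_Ioc] at hsdiff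
    linarith [le_max_left (b - a) 0]
  calc c * ((b - a) - m) ≤ c * volume.real (Ioc a b \ E) := mul_le_mul_of_nonneg_left hvol hc
    _ = ∫ _ in Ioc a b \ E, c := by rw [setIntegral_const, smul_eq_mul, mul_comm]
    _ ≤ ∫ s in Ioc a b \ E, h s :=
        setIntegral_mono_on_ae (integrableOn_const (measure_ne_top_of_subset sdiff_subset
          measure_Ioc_lt_top.ne)) (hint.mono_set sdiff_subset) (measurableSet_Ioc.diff hE)
          (h_lower.mono fun s hs hsE => hs hsE.2)
    _ ≤ ∫ s in Ioc a b, h s :=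
        setIntegral_mono_set hint (ae_restrict_of_ae h_nonneg) sdiff_subset.eventuallyLE

theorem mul_sub_le_abs_intervalIntegral {h : ℝ → ℝ} {E : Set ℝ} {c m : ℝ}
    (hh : LocallyIntegrable h) (h_nonneg : ∀ᵐ s, 0 ≤ h s) (hc : 0 ≤ c)
    (h_lower : ∀ᵐ s, s ∉ E → c ≤ h s) (hE : MeasurableSet E)
    (hE_vol : volume E ≤ ENNReal.ofReal m) (hm : 0 ≤ m) (a b : ℝ) :
    c * (|b - a| - m) ≤ |∫ s in a..b, h s| := by
  have hIoc := mul_sub_le_setIntegral_Ioc hh h_nonneg hc h_lower hE hE_vol hm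
  rcases le_total a b with hab | hba
  · rw [intervalIntegral.integral_of_le hab, abs_of_nonneg (sub_nonneg.2 hab)]
    exact (hIoc a b).trans (le_abs_self _)
  · rw [intervalIntegral.integral_of_ge hba, abs_neg, abs_sub_comm,
      abs_of_nonneg (sub_nonneg.2 hba)]
    exact (hIoc b a).trans (le_abs_self _)

theorem one_half_le_cos_half_sq {x : ℝ} (hx : |x| ≤ π / 2) : 1 / 2 ≤ cos (x / 2) ^ 2 := by
  have hcos := cos_nonneg_of_neg_pi_div_two_le_of_le (neg_le_of_abs_le hx) (le_of_abs_le hx)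
  rw [cos_sq, mul_div_cancel₀ x two_ne_zero]
  linarith

theorem div_two_pow_le_cos_half_pow_mul {x y C : ℝ} (n : ℕ) (hx : |x| ≤ π / 2) (hC : 0 ≤ C)
    (hy : C ≤ y) : C / 2 ^ n ≤ cos (x / 2) ^ (2 * n) * y := by
  have hcos : (1 / 2) ^ n ≤ (cos (x / 2) ^ 2) ^ n :=
    pow_le_pow_left₀ (by norm_num) (one_half_le_cos_half_sq hx) n
  calc C / 2 ^ n = (1 / 2) ^ n * C := by rw [one_div_pow, div_eq_inv_mul, one_div]
    _ ≤ (cos (x / 2) ^ 2) ^ n * y := mul_le_mul hcos hy hC (by positivity)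
    _ = cos (x / 2) ^ (2 * n) * y := by rw [pow_mul]

theorem div_two_pow_mul_sub_sq_le_abs_intervalIntegral (n : ℕ) {v ξ : ℝ → ℝ} {B C C' : ℝ}
    (hv : Measurable v) (hξ : Measurable ξ) (hv_L2 : eLpNorm v 2 volume ≤ ENNReal.ofReal B)
    (hC : 0 < C) (hξ_bd : ∀ᵐ s, C ≤ ξ s ∧ ξ s ≤ C') (a b : ℝ) :
    C / 2 ^ n * (|b - a| - B ^ 2) ≤ |∫ s in a..b, cos (v s / 2) ^ (2 * n) * ξ s| := by
  have hloc : LocallyIntegrable (fun s => cos (v s / 2) ^ (2 * n) * ξ s) :=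
    (locallyIntegrable_const C').mono (by fun_prop) (hξ_bd.mono fun s hs => by
      rw [norm_mul, norm_pow, Real.norm_of_nonneg (hC.le.trans (hs.1.trans hs.2)),
        Real.norm_of_nonneg (hC.le.trans hs.1)]
      exact mul_le_of_le_one_left (hC.le.trans hs.1) (pow_le_one₀ (norm_nonneg _)
        (abs_cos_le_one _)) |>.trans hs.2)
  refine mul_sub_le_abs_intervalIntegral (E := {s | 1 ≤ |v s|}) hloc
    (hξ_bd.mono fun s hs => mul_nonneg ((even_two_mul n).pow_nonneg _) (hC.le.trans hs.1))
    (by positivity) (hξ_bd.mono fun s hs hsE => ?_)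
    (measurableSet_le measurable_const hv.abs)
    (measure_one_le_abs_le_ofReal_sq hv.aestronglyMeasurable hv_L2) (sq_nonneg B) a b
  have hv1 : |v s| ≤ π / 2 := (le_of_lt (not_le.1 hsE)).trans (by linarith [pi_gt_three])
  exact div_two_pow_le_cos_half_pow_mul n hv1 hC.le hs.1

end LowerBound

theorem singular_integral_estimate_general (lam k : ℕ) (hk : k = 2 * (lam + 1))
    (q B Cminus Cplus : ℝ) (hq : 1 ≤ q) (hCm : 0 < Cminus)
    (f v ξ : ℝ → ℝ) (hf : MemLp f (ENNReal.ofReal q) (volume : Measure ℝ))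
    (hv : Measurable v) (hξ : Measurable ξ)
    (hvL2 : eLpNorm v 2 (volume : Measure ℝ) ≤ ENNReal.ofReal B)
    (hξbd : ∀ᵐ Y ∂(volume : Measure ℝ), Cminus ≤ ξ Y ∧ ξ Y ≤ Cplus) :
    eLpNorm (fun Y : ℝ => ∫ Y' : ℝ,
        Real.exp (-|∫ s in Y..Y', Real.cos (v s / 2) ^ k * ξ s|) * f Y')
      (ENNReal.ofReal q) (volume : Measure ℝ)
      ≤ ENNReal.ofReal
          (∫ z : ℝ, min 1 (Real.exp ((Cminus / 2 ^ (lam + 1)) * ((9 / 2) * B ^ 2 - |z|))))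
        * eLpNorm f (ENNReal.ofReal q) (volume : Measure ℝ) ∧
    (∫ z : ℝ, min 1 (Real.exp ((Cminus / 2 ^ (lam + 1)) * ((9 / 2) * B ^ 2 - |z|))))
      = 9 * B ^ 2 + 2 ^ (lam + 2) / Cminus := by
  subst hk
  have hc : 0 < Cminus / 2 ^ (lam + 1) := by positivity
  have hlow := div_two_pow_mul_sub_sq_le_abs_intervalIntegral (lam + 1) hv hξ hvL2 hCm hξbd
  have hker : ∀ Y Y', |Real.exp (-|∫ s in Y..Y', Real.cos (v s / 2) ^ (2 * (lam + 1)) * ξ s|)|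
      ≤ min 1 (Real.exp (Cminus / 2 ^ (lam + 1) * ((9 / 2) * B ^ 2 - |Y - Y'|))) := fun Y Y' => by
    rw [abs_of_pos (Real.exp_pos _)]
    refine le_min (Real.exp_le_one_iff.2 (neg_nonpos.2 (abs_nonneg _))) (Real.exp_le_exp.2 ?_)
    have hYY' := hlow Y Y'
    rw [abs_sub_comm] at hYY'
    nlinarith [mul_nonneg hc.le (sq_nonneg B)]
  refine ⟨eLpNorm_integral_mul_le_of_abs_le (integrable_min_one_exp_mul_sub_abs hc)
    (by fun_prop) hker hf.1 (one_le_ofReal.2 hq) ofReal_ne_top, ?_⟩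
  rw [integral_min_one_exp_mul_sub_abs hc (by positivity)]
  field_simp
  ring

/-- Singular-integral estimate (Lemma 4.2): under `|v| ≤ 3π/2` a.e., `‖v‖_{L²} ≤ B` and
`C⁻ ≤ ξ ≤ C⁺` a.e., the operator
`(Λf)(Y) = ∫ exp(−|∫_Y^{Y'} cos^k(v/2)ξ|) f(Y') dY'` satisfies
`‖Λf‖_{L^q} ≤ ‖g‖_{L¹}·‖f‖_{L^q}` with `g(z) = min{1, exp((C⁻/2^{λ+1})((9/2)B² − |z|))}`,
and `‖g‖_{L¹} = 9B² + 2^{λ+2}/C⁻`. -/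
theorem singular_integral_estimate (lam k : ℕ) (hlam : 1 ≤ lam) (hk : k = 2 * (lam + 1))
    (q B Cminus Cplus : ℝ) (hq : 1 ≤ q) (hB : 0 < B) (hCm : 0 < Cminus) (hCp : 0 < Cplus)
    (f v ξ : ℝ → ℝ) (hf : MemLp f (ENNReal.ofReal q) (volume : Measure ℝ))
    (hv : Measurable v) (hξ : Measurable ξ)
    (hvbd : ∀ᵐ Y ∂(volume : Measure ℝ), |v Y| ≤ 3 * Real.pi / 2)
    (hvL2 : eLpNorm v 2 (volume : Measure ℝ) ≤ ENNReal.ofReal B)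
    (hξbd : ∀ᵐ Y ∂(volume : Measure ℝ), Cminus ≤ ξ Y ∧ ξ Y ≤ Cplus) :
    eLpNorm (fun Y : ℝ => ∫ Y' : ℝ,
        Real.exp (-|∫ s in Y..Y', Real.cos (v s / 2) ^ k * ξ s|) * f Y')
      (ENNReal.ofReal q) (volume : Measure ℝ)
      ≤ ENNReal.ofReal
          (∫ z : ℝ, min 1 (Real.exp ((Cminus / 2 ^ (lam + 1)) * ((9 / 2) * B ^ 2 - |z|))))
        * eLpNorm f (ENNReal.ofReal q) (volume : Measure ℝ) ∧
    (∫ z : ℝ, min 1 (Real.exp ((Cminus / 2 ^ (lam + 1)) * ((9 / 2) * B ^ 2 - |z|))))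
      = 9 * B ^ 2 + 2 ^ (lam + 2) / Cminus :=
  singular_integral_estimate_general lam k hk q B Cminus Cplus hq hCm f v ξ hf hv hξ hvL2 hξbd
end

section
/- Let λ ≥ 1 be an integer. Let u : ℝ → ℝ be absolutely continuous with u ∈ L²(ℝ) and a.e. derivative u' ∈ L²(ℝ), and set E₀ := ∫_ℝ (u² + (u')²) dx. Define P := p * ( ((2λ+1)/2) u^λ (u')² + u^{λ+2} ) and P_x := p' * ( ((2λ+1)/2) u^λ (u')² + u^{λ+2} ), where p(x) = (1/2)e^{−|x|} and p'(x) = −(1/2)·sign(x)·e^{−|x|}. Then ‖P‖_{L^∞(ℝ)} ≤ ((2λ+3)/4)·E₀^{(λ+2)/2} and ‖P_x‖_{L^∞(ℝ)} ≤ ((2λ+3)/4)·E₀^{(λ+2)/2}. -/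
/-!
Write `E₀ = ∫ (u² + u'²)`. Since `u` is absolutely continuous, `u(x)² - u(a)² = ∫ₐˣ 2uu'`,
which is at most `E₀` by `2uu' ≤ u² + u'²`; as `u² ∈ L¹`, `u(a)²` is arbitrarily small for
suitable `a ≤ x`, so `‖u‖²_∞ ≤ E₀`. Hence the source term is bounded pointwise by
`(λ + 3/2) E₀^{λ/2} (u² + u'²)`, and convolving with a kernel of sup norm `1/2` gives the bound.
-/

open MeasureTheory Set

section Sobolev

variable {u w : ℝ → ℝ}

lemma sq_sub_sq_eq_integral_two_mul (hw : LocallyIntegrable w volume)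
    (hAC : ∀ x : ℝ, u x = u 0 + ∫ y in (0:ℝ)..x, w y) (a b : ℝ) :
    u b ^ 2 - u a ^ 2 = ∫ t in a..b, 2 * (u t * w t) := by
  have hII : ∀ c d : ℝ, IntervalIntegrable w volume c d := fun c d =>
    (hw.integrableOn_isCompact isCompact_uIcc).intervalIntegrable
  have hu : u = fun x => u a + ∫ y in a..x, w y := funext fun x => by
    rw [hAC x, hAC a, add_assoc,
      intervalIntegral.integral_add_adjacent_intervals (hII 0 a) (hII a x)]
  have hu_ac : AbsolutelyContinuousOnInterval u a b := by
    rw [hu]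
    exact (LipschitzWith.const (u a)).lipschitzOnWith.absolutelyContinuousOnInterval.fun_add
      ((hII a b).absolutelyContinuousOnInterval_intervalIntegral left_mem_uIcc)
  have hderiv : ∀ᵐ t, deriv u t = w t := by
    filter_upwards [LocallyIntegrable.ae_hasDerivAt_integral hw] with t ht
    rw [hu]
    exact ((ht a).const_add (u a)).deriv
  rw [sq, sq, ← hu_ac.integral_deriv_mul_eq_sub hu_ac]
  refine intervalIntegral.integral_congr_ae ?_
  filter_upwards [hderiv] with t ht _
  rw [ht]
  ring

lemma exists_le_lt_of_integrable {f : ℝ → ℝ} (hf : Integrable f volume) {ε : ℝ} (hε : 0 < ε)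
    (x : ℝ) : ∃ a ≤ x, f a < ε := by
  by_contra! h
  have hconst : IntegrableOn (fun _ => ε) (Iic x) volume :=
    hf.integrableOn.mono' aestronglyMeasurable_const
      (ae_restrict_of_forall_mem measurableSet_Iic fun a ha => by
        rw [Real.norm_of_nonneg hε.le]; exact h a ha)
  rw [integrableOn_const_iff, Real.volume_Iic] at hconst
  simp [hε.ne'] at hconst

lemma sq_le_integral_sq_add_sq (hAC : ∀ x : ℝ, u x = u 0 + ∫ y in (0:ℝ)..x, w y)
    (hu2 : MemLp u 2 volume) (hw2 : MemLp w 2 volume) (x : ℝ) :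
    u x ^ 2 ≤ ∫ y, (u y ^ 2 + w y ^ 2) := by
  have hE : Integrable (fun y => u y ^ 2 + w y ^ 2) volume :=
    hu2.integrable_sq.add hw2.integrable_sq
  have huw : Integrable (fun t => 2 * (u t * w t)) volume :=
    (hu2.integrable_mul hw2).const_mul 2
  refine le_of_forall_pos_le_add fun ε hε => ?_
  obtain ⟨a, hax, ha⟩ := exists_le_lt_of_integrable hu2.integrable_sq hε x
  calc u x ^ 2
      = u a ^ 2 + ∫ t in a..x, 2 * (u t * w t) := by
        rw [← sq_sub_sq_eq_integral_two_mul (hw2.locallyIntegrable one_le_two) hAC]; ring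
    _ ≤ ε + ∫ t in a..x, (u t ^ 2 + w t ^ 2) :=
        add_le_add ha.le <| intervalIntegral.integral_mono_on hax huw.intervalIntegrable
          hE.intervalIntegrable fun t _ => by rw [← mul_assoc]; exact two_mul_le_add_sq _ _
    _ ≤ ε + ∫ y, (u y ^ 2 + w y ^ 2) := by
        rw [intervalIntegral.integral_of_le hax]
        exact add_le_add le_rfl (setIntegral_le_integral hE (.of_forall fun y => by positivity))
    _ = _ := add_comm _ _

end Sobolev

lemma abs_mul_pow_mul_sq_add_pow_le {c M a b : ℝ} (lam : ℕ) (hc : 0 ≤ c) (ha : |a| ≤ M) :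
    |c * a ^ lam * b ^ 2 + a ^ (lam + 2)| ≤ (c + 1) * M ^ lam * (a ^ 2 + b ^ 2) := by
  have hpow : |a| ^ lam ≤ M ^ lam := pow_le_pow_left₀ (abs_nonneg a) ha lam
  have hM : 0 ≤ M ^ lam := (pow_nonneg (abs_nonneg a) lam).trans hpow
  calc |c * a ^ lam * b ^ 2 + a ^ (lam + 2)|
      ≤ c * |a| ^ lam * b ^ 2 + |a| ^ lam * a ^ 2 := by
        refine (abs_add_le _ _).trans_eq ?_
        simp only [pow_add, abs_mul, abs_pow, abs_of_nonneg hc, sq_abs]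
    _ ≤ c * M ^ lam * b ^ 2 + M ^ lam * a ^ 2 := by gcongr
    _ ≤ (c + 1) * M ^ lam * (a ^ 2 + b ^ 2) := by
        nlinarith [mul_nonneg hM (sq_nonneg a), mul_nonneg (mul_nonneg hc hM) (sq_nonneg b)]

lemma abs_integral_kernel_mul_le {K g h : ℝ → ℝ} {C : ℝ} (hK : ∀ z, |K z| ≤ C)
    (hh : Integrable h volume) (hg : ∀ y, |g y| ≤ h y) (x : ℝ) :
    |∫ y, K (x - y) * g y| ≤ C * ∫ y, h y := by
  rw [← Real.norm_eq_abs, ← integral_const_mul C h]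
  refine norm_integral_le_of_norm_le (hh.const_mul C) (.of_forall fun y => ?_)
  rw [Real.norm_eq_abs, abs_mul]
  exact mul_le_mul (hK _) (hg y) (abs_nonneg _) ((abs_nonneg _).trans (hK 0))

lemma sqrt_pow_mul_self {E : ℝ} (hE : 0 ≤ E) (n : ℕ) :
    √E ^ n * E = E ^ (((n : ℝ) + 2) / 2) := by
  rw [Real.sqrt_eq_rpow, ← Real.rpow_natCast, ← Real.rpow_mul hE, ← Real.rpow_add_one' hE]
  · ring_nf
  · positivity

lemma abs_integral_kernel_mul_source_le {K u w : ℝ → ℝ} (hK : ∀ z, |K z| ≤ 1 / 2) (lam : ℕ)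
    (hAC : ∀ x : ℝ, u x = u 0 + ∫ y in (0:ℝ)..x, w y)
    (hu2 : MemLp u 2 volume) (hw2 : MemLp w 2 volume) (x : ℝ) :
    |∫ y, K (x - y) * (((2 * (lam : ℝ) + 1) / 2) * u y ^ lam * w y ^ 2 + u y ^ (lam + 2))|
      ≤ ((2 * (lam : ℝ) + 3) / 4) * (∫ x, (u x ^ 2 + w x ^ 2)) ^ (((lam : ℝ) + 2) / 2) := by
  set E := ∫ x, (u x ^ 2 + w x ^ 2)
  have hE : 0 ≤ E := integral_nonneg fun y => by positivity
  have hsource : ∀ y, |((2 * (lam : ℝ) + 1) / 2) * u y ^ lam * w y ^ 2 + u y ^ (lam + 2)|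
      ≤ ((2 * (lam : ℝ) + 1) / 2 + 1) * √E ^ lam * (u y ^ 2 + w y ^ 2) := fun y =>
    abs_mul_pow_mul_sq_add_pow_le lam (by positivity)
      (Real.abs_le_sqrt (sq_le_integral_sq_add_sq hAC hu2 hw2 y))
  calc _ ≤ 1 / 2 * ∫ y, ((2 * (lam : ℝ) + 1) / 2 + 1) * √E ^ lam * (u y ^ 2 + w y ^ 2) :=
        abs_integral_kernel_mul_le hK
          ((hu2.integrable_sq.add hw2.integrable_sq).const_mul _) hsource x
    _ = ((2 * (lam : ℝ) + 3) / 4) * (√E ^ lam * E) := by rw [integral_const_mul]; ring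
    _ = _ := by rw [sqrt_pow_mul_self hE]

lemma exp_neg_abs_le_one (z : ℝ) : Real.exp (-|z|) ≤ 1 :=
  Real.exp_le_one_iff.2 (neg_nonpos.2 (abs_nonneg z))

lemma abs_half_mul_exp_neg_abs_le (z : ℝ) : |1 / 2 * Real.exp (-|z|)| ≤ 1 / 2 := by
  rw [abs_of_pos (by positivity)]
  linarith [exp_neg_abs_le_one z]

lemma abs_neg_half_mul_sign_mul_exp_neg_abs_le (z : ℝ) :
    |-(1 / 2) * Real.sign z * Real.exp (-|z|)| ≤ 1 / 2 := by
  have hsign : |Real.sign z| ≤ 1 := by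
    rcases Real.sign_apply_eq z with h | h | h <;> simp [h]
  rw [abs_mul, abs_mul, abs_of_pos (Real.exp_pos _), abs_neg, abs_of_pos one_half_pos]
  calc 1 / 2 * |Real.sign z| * Real.exp (-|z|) ≤ 1 / 2 * 1 * 1 := by
        gcongr
        exact exp_neg_abs_le_one z
    _ = 1 / 2 := by norm_num

theorem P_Px_uniform_bound_general (lam : ℕ) (u w : ℝ → ℝ)
    (hAC : ∀ x : ℝ, u x = u 0 + ∫ y in (0:ℝ)..x, w y)
    (hu2 : MemLp u 2 (volume : Measure ℝ)) (hw2 : MemLp w 2 (volume : Measure ℝ)) :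
    (∀ x : ℝ,
      |∫ y : ℝ, (1 / 2) * Real.exp (-|x - y|) *
          (((2 * (lam : ℝ) + 1) / 2) * u y ^ lam * w y ^ 2 + u y ^ (lam + 2))|
        ≤ ((2 * (lam : ℝ) + 3) / 4) * (∫ x : ℝ, (u x ^ 2 + w x ^ 2)) ^ (((lam : ℝ) + 2) / 2)) ∧
    (∀ x : ℝ,
      |∫ y : ℝ, (-(1 / 2) * Real.sign (x - y) * Real.exp (-|x - y|)) *
          (((2 * (lam : ℝ) + 1) / 2) * u y ^ lam * w y ^ 2 + u y ^ (lam + 2))|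
        ≤ ((2 * (lam : ℝ) + 3) / 4) * (∫ x : ℝ, (u x ^ 2 + w x ^ 2)) ^ (((lam : ℝ) + 2) / 2)) :=
  ⟨abs_integral_kernel_mul_source_le (K := fun z => 1 / 2 * Real.exp (-|z|))
      abs_half_mul_exp_neg_abs_le lam hAC hu2 hw2,
    abs_integral_kernel_mul_source_le (K := fun z => -(1 / 2) * Real.sign z * Real.exp (-|z|))
      abs_neg_half_mul_sign_mul_exp_neg_abs_le lam hAC hu2 hw2⟩

/-- Uniform bound (PI1)/(Energy4) on the nonlocal source term `P` (and `P_x`) of the λ-family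
equation: if `u` is absolutely continuous with derivative `w`, `u, w ∈ L²`, and
`E₀ = ∫ (u² + w²)`, then `‖P‖_∞, ‖P_x‖_∞ ≤ ((2λ+3)/4)·E₀^{(λ+2)/2}`. -/
theorem P_Px_uniform_bound (lam : ℕ) (hlam : 1 ≤ lam) (u w : ℝ → ℝ)
    (hw : LocallyIntegrable w (volume : Measure ℝ))
    (hAC : ∀ x : ℝ, u x = u 0 + ∫ y in (0:ℝ)..x, w y)
    (hu2 : MemLp u 2 (volume : Measure ℝ)) (hw2 : MemLp w 2 (volume : Measure ℝ)) :
    (∀ x : ℝ,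
      |∫ y : ℝ, (1 / 2) * Real.exp (-|x - y|) *
          (((2 * (lam : ℝ) + 1) / 2) * u y ^ lam * w y ^ 2 + u y ^ (lam + 2))|
        ≤ ((2 * (lam : ℝ) + 3) / 4) * (∫ x : ℝ, (u x ^ 2 + w x ^ 2)) ^ (((lam : ℝ) + 2) / 2)) ∧
    (∀ x : ℝ,
      |∫ y : ℝ, (-(1 / 2) * Real.sign (x - y) * Real.exp (-|x - y|)) *
          (((2 * (lam : ℝ) + 1) / 2) * u y ^ lam * w y ^ 2 + u y ^ (lam + 2))|
        ≤ ((2 * (lam : ℝ) + 3) / 4) * (∫ x : ℝ, (u x ^ 2 + w x ^ 2)) ^ (((lam : ℝ) + 2) / 2)) :=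
  P_Px_uniform_bound_general lam u w hAC hu2 hw2
end

section
/- Let λ ≥ 1 be an integer and k = 2(λ+1). Let u : ℝ² → ℝ be twice continuously differentiable in (t,x) and let G : ℝ² → ℝ be continuous, and suppose that at every point ∂_t∂_x u + u^{λ+1} ∂_x² u + (1/2) u^λ (∂_x u)² − u^{λ+2} + G = 0. Then at every point ∂_t( (∂_x u)^k ) + ∂_x( u^{λ+1} (∂_x u)^k ) = ( u^{λ+2} − G ) · k · (∂_x u)^{k−1}. -/
/-!
Write `w = u_x`. Since `u` is `C²`, `w` is `C¹`, and `u_{tx} = w_t`, `u_{xx} = w_x`. The chain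
and product rules give
`(w^k)_t + (u^{λ+1} w^k)_x = k w^{k-1} (w_t + u^{λ+1} w_x) + (λ+1) u^λ w^{k+1}`,
and substituting `w_t + u^{λ+1} w_x = u^{λ+2} - G - ½ u^λ w²` from the equation leaves the
extra term `((λ+1) - k/2) u^λ w^{k+1}`, which vanishes precisely because `k = 2(λ+1)`.
-/

/-- Spatial derivative `u_x`. -/
noncomputable def ux (u : ℝ → ℝ → ℝ) (t x : ℝ) : ℝ := deriv (u t) x

/-- Second spatial derivative `u_{xx}`. -/
noncomputable def uxx (u : ℝ → ℝ → ℝ) (t x : ℝ) : ℝ := deriv (deriv (u t)) x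

/-- Mixed derivative `u_{tx}`. -/
noncomputable def utx (u : ℝ → ℝ → ℝ) (t x : ℝ) : ℝ := deriv (fun s => deriv (u s) x) t

open Function

section Partials

variable {E : Type*} [NormedAddCommGroup E] [NormedSpace ℝ E] {f : ℝ → ℝ → E} {t x : ℝ}

theorem hasDerivAt_uncurry_right (hf : DifferentiableAt ℝ (uncurry f) (t, x)) :
    HasDerivAt (f t) (fderiv ℝ (uncurry f) (t, x) (0, 1)) x :=
  hf.hasFDerivAt.comp_hasDerivAt (l := uncurry f) x
    ((hasDerivAt_const x t).prodMk (hasDerivAt_id x))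

theorem hasDerivAt_uncurry_left (hf : DifferentiableAt ℝ (uncurry f) (t, x)) :
    HasDerivAt (fun s => f s x) (fderiv ℝ (uncurry f) (t, x) (1, 0)) t :=
  hf.hasFDerivAt.comp_hasDerivAt (l := uncurry f) t
    ((hasDerivAt_id t).prodMk (hasDerivAt_const t x))

end Partials

theorem contDiff_uncurry_ux {u : ℝ → ℝ → ℝ} {n : WithTop ℕ∞}
    (hu : ContDiff ℝ (n + 1) (uncurry u)) : ContDiff ℝ n (uncurry (ux u)) := by
  have hud : Differentiable ℝ (uncurry u) := hu.differentiable (by simp)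
  have h : uncurry (ux u) = fun q => fderiv ℝ (uncurry u) q (0, 1) :=
    funext fun q => (hasDerivAt_uncurry_right (hud q)).deriv
  rw [h]
  exact (hu.fderiv_right le_rfl).clm_apply contDiff_const

theorem hasDerivAt_ux {u : ℝ → ℝ → ℝ} {t x : ℝ}
    (hu : DifferentiableAt ℝ (uncurry u) (t, x)) : HasDerivAt (u t) (ux u t x) x :=
  (hasDerivAt_uncurry_right hu).differentiableAt.hasDerivAt

section Balance

variable {u : ℝ → ℝ → ℝ} (hu : ContDiff ℝ 2 (uncurry u)) (t x : ℝ)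
include hu

theorem hasDerivAt_ux_space : HasDerivAt (ux u t) (uxx u t x) x :=
  hasDerivAt_ux ((contDiff_uncurry_ux hu).differentiable one_ne_zero (t, x))

theorem hasDerivAt_ux_time : HasDerivAt (fun s => ux u s x) (utx u t x) t :=
  (hasDerivAt_uncurry_left (((contDiff_uncurry_ux hu).differentiable one_ne_zero) (t, x)))
    |>.differentiableAt.hasDerivAt

theorem hasDerivAt_ux_pow_time (k : ℕ) :
    HasDerivAt (fun s => ux u s x ^ k) (k * ux u t x ^ (k - 1) * utx u t x) t :=
  (hasDerivAt_ux_time hu t x).pow k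

theorem hasDerivAt_flux (m k : ℕ) :
    HasDerivAt (fun y => u t y ^ (m + 1) * ux u t y ^ k)
      ((m + 1 : ℕ) * u t x ^ m * ux u t x * ux u t x ^ k
        + u t x ^ (m + 1) * (k * ux u t x ^ (k - 1) * uxx u t x)) x := by
  simpa only [Nat.add_sub_cancel] using
    ((hasDerivAt_ux (hu.differentiable two_ne_zero (t, x))).fun_pow (m + 1)).fun_mul
      ((hasDerivAt_ux_space hu t x).fun_pow k)

end Balance

theorem higher_order_energy_balance_general (lam k : ℕ) (hk : k = 2 * (lam + 1))
    (u G : ℝ → ℝ → ℝ)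
    (hu : ContDiff ℝ 2 (fun q : ℝ × ℝ => u q.1 q.2))
    (heq : ∀ t x : ℝ,
      utx u t x + (u t x) ^ (lam + 1) * uxx u t x
        + (1 / 2) * (u t x) ^ lam * (ux u t x) ^ 2 - (u t x) ^ (lam + 2) + G t x = 0) :
    ∀ t x : ℝ,
      deriv (fun s : ℝ => (ux u s x) ^ k) t
        + deriv (fun y : ℝ => (u t y) ^ (lam + 1) * (ux u t y) ^ k) x
      = ((u t x) ^ (lam + 2) - G t x) * (k : ℝ) * (ux u t x) ^ (k - 1) := by
  intro t x
  rw [(hasDerivAt_ux_pow_time hu t x k).deriv, (hasDerivAt_flux hu t x lam k).deriv]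
  obtain rfl := hk
  rw [show 2 * (lam + 1) - 1 = 2 * lam + 1 by omega]
  push_cast
  linear_combination (2 * ((lam : ℝ) + 1) * ux u t x ^ (2 * lam + 1)) * heq t x

/-- Higher-order energy balance law (E-3): if `u` is C² and satisfies the differentiated
equation `u_{tx} + u^{λ+1}u_{xx} + (1/2)u^λ u_x² − u^{λ+2} + G = 0` at every point, then
`(u_x^k)_t + (u^{λ+1}u_x^k)_x = (u^{λ+2} − G)·k·u_x^{k−1}` with `k = 2(λ+1)`. -/
theorem higher_order_energy_balance (lam k : ℕ) (hlam : 1 ≤ lam) (hk : k = 2 * (lam + 1))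
    (u G : ℝ → ℝ → ℝ)
    (hu : ContDiff ℝ 2 (fun q : ℝ × ℝ => u q.1 q.2))
    (hG : Continuous (fun q : ℝ × ℝ => G q.1 q.2))
    (heq : ∀ t x : ℝ,
      utx u t x + (u t x) ^ (lam + 1) * uxx u t x
        + (1 / 2) * (u t x) ^ lam * (ux u t x) ^ 2 - (u t x) ^ (lam + 2) + G t x = 0) :
    ∀ t x : ℝ,
      deriv (fun s : ℝ => (ux u s x) ^ k) t
        + deriv (fun y : ℝ => (u t y) ^ (lam + 1) * (ux u t y) ^ k) x
      = ((u t x) ^ (lam + 2) - G t x) * (k : ℝ) * (ux u t x) ^ (k - 1) :=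
  higher_order_energy_balance_general lam k hk u G hu heq
end

section
/- Let λ ≥ 1 be an integer and let I ⊆ ℝ be an interval. Let u, Π : I → ℝ be continuous and let v, ξ : I → ℝ be differentiable functions satisfying, for all T ∈ I, v'(T) = −u^λ sin²(v/2) + 2u^{λ+2} cos²(v/2) − 2cos²(v/2)·Π and ξ'(T) = ((λ+1)/2) u^λ ξ sin v + (λ+1) u^{λ+2} ξ sin v − (λ+1) ξ sin v · Π (all right-hand sides evaluated at T). Then for all T ∈ I, the function W(T) := (1/2) ξ(T) sin(v(T)) cos^{2λ}(v(T)/2) is differentiable with W'(T) = ξ·[ ((2λ+1)/2) u^λ sin²(v/2) cos^{2λ}(v/2) + u^{λ+2} cos^{2(λ+1)}(v/2) − cos^{2(λ+1)}(v/2)·Π ]. -/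
/-!
Writing `½ sin v = sin (v/2) cos (v/2)`, the quantity `W` is `ξ · F (v)` with
`F x = sin (x/2) cos (x/2) ^ (2λ+1)`, whose derivative is `½ cos (x/2) ^ 2λ (cos² - (2λ+1) sin²)`.
Substituting the two characteristic equations into `ξ' F(v) + ξ F'(v) v'`, the claimed formula
follows from `sin² + cos² = 1` alone.
-/

open Real

theorem half_sin_mul_cos_half_pow_eq (n : ℕ) (x : ℝ) :
    1 / 2 * sin x * cos (x / 2) ^ (2 * n) = sin (x / 2) * cos (x / 2) ^ (2 * n + 1) := by
  conv_lhs => rw [← mul_div_cancel₀ x two_ne_zero, sin_two_mul]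
  ring

theorem hasDerivAt_sin_half_mul_cos_half_pow (n : ℕ) (x : ℝ) :
    HasDerivAt (fun x => sin (x / 2) * cos (x / 2) ^ (2 * n + 1))
      (cos (x / 2) ^ (2 * n) * (cos (x / 2) ^ 2 - (2 * n + 1) * sin (x / 2) ^ 2) / 2) x := by
  have hhalf : HasDerivAt (fun x : ℝ => x / 2) (1 / 2) x := (hasDerivAt_id x).div_const 2
  refine (hhalf.sin.fun_mul (hhalf.cos.fun_pow (2 * n + 1))).congr_deriv ?_
  push_cast
  ring

theorem uY_identity_propagation_general (lam : ℕ)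
    (I : Set ℝ)
    (u Pq v ξ : ℝ → ℝ)
    (hv : ∀ T ∈ I, HasDerivAt v
      (-(u T) ^ lam * Real.sin (v T / 2) ^ 2 + 2 * (u T) ^ (lam + 2) * Real.cos (v T / 2) ^ 2
        - 2 * Real.cos (v T / 2) ^ 2 * Pq T) T)
    (hξ : ∀ T ∈ I, HasDerivAt ξ
      ((((lam : ℝ) + 1) / 2) * (u T) ^ lam * ξ T * Real.sin (v T)
        + ((lam : ℝ) + 1) * (u T) ^ (lam + 2) * ξ T * Real.sin (v T)
        - ((lam : ℝ) + 1) * ξ T * Real.sin (v T) * Pq T) T) :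
    ∀ T ∈ I, HasDerivAt
      (fun T : ℝ => (1 / 2) * ξ T * Real.sin (v T) * Real.cos (v T / 2) ^ (2 * lam))
      (ξ T * (((2 * (lam : ℝ) + 1) / 2) * (u T) ^ lam * Real.sin (v T / 2) ^ 2
            * Real.cos (v T / 2) ^ (2 * lam)
          + (u T) ^ (lam + 2) * Real.cos (v T / 2) ^ (2 * (lam + 1))
          - Real.cos (v T / 2) ^ (2 * (lam + 1)) * Pq T)) T := by
  intro T hT
  have hW := (hξ T hT).fun_mul ((hasDerivAt_sin_half_mul_cos_half_pow lam (v T)).comp T (hv T hT))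
  have hsin : sin (v T) = 2 * sin (v T / 2) * cos (v T / 2) := by
    rw [← sin_two_mul, mul_div_cancel₀ _ two_ne_zero]
  refine (hW.congr_deriv ?_).congr_of_eventuallyEq (.of_forall fun T => ?_)
  · simp only [Function.comp_apply, hsin]
    linear_combination (ξ T * cos (v T / 2) ^ (2 * lam) *
      ((u T ^ (lam + 2) - Pq T) * cos (v T / 2) ^ 2
        + (2 * (lam : ℝ) + 1) / 2 * u T ^ lam * sin (v T / 2) ^ 2)) * sin_sq_add_cos_sq (v T / 2)
  · simp only [Function.comp_apply, ← half_sin_mul_cos_half_pow_eq]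
    ring

/-- Propagation of the identity `u_Y = (1/2)ξ sin v cos^{2λ}(v/2)` (key computation):
if `v, ξ` solve the last two equations of the semilinear characteristic system (S-1) with
source `Pq = P + Q_x`, then `W = (1/2)ξ sin v cos^{2λ}(v/2)` has the stated derivative. -/
theorem uY_identity_propagation (lam : ℕ) (hlam : 1 ≤ lam)
    (I : Set ℝ) (hI : Set.OrdConnected I)
    (u Pq v ξ : ℝ → ℝ) (hu : ContinuousOn u I) (hPq : ContinuousOn Pq I)
    (hv : ∀ T ∈ I, HasDerivAt v
      (-(u T) ^ lam * Real.sin (v T / 2) ^ 2 + 2 * (u T) ^ (lam + 2) * Real.cos (v T / 2) ^ 2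
        - 2 * Real.cos (v T / 2) ^ 2 * Pq T) T)
    (hξ : ∀ T ∈ I, HasDerivAt ξ
      ((((lam : ℝ) + 1) / 2) * (u T) ^ lam * ξ T * Real.sin (v T)
        + ((lam : ℝ) + 1) * (u T) ^ (lam + 2) * ξ T * Real.sin (v T)
        - ((lam : ℝ) + 1) * ξ T * Real.sin (v T) * Pq T) T) :
    ∀ T ∈ I, HasDerivAt
      (fun T : ℝ => (1 / 2) * ξ T * Real.sin (v T) * Real.cos (v T / 2) ^ (2 * lam))
      (ξ T * (((2 * (lam : ℝ) + 1) / 2) * (u T) ^ lam * Real.sin (v T / 2) ^ 2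
            * Real.cos (v T / 2) ^ (2 * lam)
          + (u T) ^ (lam + 2) * Real.cos (v T / 2) ^ (2 * (lam + 1))
          - Real.cos (v T / 2) ^ (2 * (lam + 1)) * Pq T)) T :=
  uY_identity_propagation_general lam I u Pq v ξ hv hξ
end

section
/- Let λ ≥ 1 be an integer, k = 2(λ+1), and let I ⊆ ℝ be an interval. Let u, Π : I → ℝ be continuous and let v, ξ : I → ℝ be differentiable functions satisfying, for all T ∈ I, v'(T) = −u^λ sin²(v/2) + 2u^{λ+2} cos²(v/2) − 2cos²(v/2)·Π and ξ'(T) = ((λ+1)/2) u^λ ξ sin v + (λ+1) u^{λ+2} ξ sin v − (λ+1) ξ sin v · Π. Then the function Z(T) := cos^k(v(T)/2)·ξ(T) is differentiable on I with Z'(T) = ((λ+1)/2)·u^λ·ξ·sin(v)·cos^{k−2}(v/2) for all T ∈ I. -/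
/-!
Write `c = cos (v/2)`, `s = sin (v/2)` and `sin v = 2 s c`. Differentiating `Z = c^k ξ` gives
`Z' = c^(k-1) (c ξ' - (λ+1) s v' ξ)`, and in `c ξ' - (λ+1) s v' ξ` the terms carrying
`u^(λ+2)` and the nonlocal source `Π` cancel exactly, leaving `(λ+1) u^λ ξ s (s² + c²)`.
Pythagoras then finishes.
-/

open Real

theorem hasDerivAt_cos_half_pow_mul {v ξ : ℝ → ℝ} {v' ξ' t : ℝ} (m : ℕ)
    (hv : HasDerivAt v v' t) (hξ : HasDerivAt ξ ξ' t) :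
    HasDerivAt (fun t => cos (v t / 2) ^ (2 * (m + 1)) * ξ t)
      (cos (v t / 2) ^ (2 * m + 1)
        * (cos (v t / 2) * ξ' - ((m : ℝ) + 1) * sin (v t / 2) * v' * ξ t)) t := by
  refine ((((hv.div_const 2).cos).pow (2 * (m + 1))).mul hξ).congr_deriv ?_
  rw [Pi.pow_apply, show 2 * (m + 1) - 1 = 2 * m + 1 by omega,
    show 2 * (m + 1) = 2 * m + 1 + 1 by ring]
  push_cast
  ring

theorem sin_eq_two_mul_sin_half_mul_cos_half (x : ℝ) :
    sin x = 2 * sin (x / 2) * cos (x / 2) := by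
  rw [← sin_two_mul, mul_div_cancel₀ x two_ne_zero]

theorem cos_half_mul_sub_sin_half_mul_eq (x m a b p ξ : ℝ) :
    cos (x / 2) * (m / 2 * a * ξ * sin x + m * b * ξ * sin x - m * ξ * sin x * p)
      - m * sin (x / 2) * (-a * sin (x / 2) ^ 2 + 2 * b * cos (x / 2) ^ 2
        - 2 * cos (x / 2) ^ 2 * p) * ξ
      = m * a * ξ * sin (x / 2) := by
  rw [sin_eq_two_mul_sin_half_mul_cos_half]
  linear_combination m * a * ξ * sin (x / 2) * sin_sq_add_cos_sq (x / 2)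

theorem xY_identity_propagation_general (lam k : ℕ) (hk : k = 2 * (lam + 1))
    (I : Set ℝ)
    (u Pq v ξ : ℝ → ℝ)
    (hv : ∀ T ∈ I, HasDerivAt v
      (-(u T) ^ lam * Real.sin (v T / 2) ^ 2 + 2 * (u T) ^ (lam + 2) * Real.cos (v T / 2) ^ 2
        - 2 * Real.cos (v T / 2) ^ 2 * Pq T) T)
    (hξ : ∀ T ∈ I, HasDerivAt ξ
      ((((lam : ℝ) + 1) / 2) * (u T) ^ lam * ξ T * Real.sin (v T)
        + ((lam : ℝ) + 1) * (u T) ^ (lam + 2) * ξ T * Real.sin (v T)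
        - ((lam : ℝ) + 1) * ξ T * Real.sin (v T) * Pq T) T) :
    ∀ T ∈ I, HasDerivAt (fun T : ℝ => Real.cos (v T / 2) ^ k * ξ T)
      ((((lam : ℝ) + 1) / 2) * (u T) ^ lam * ξ T * Real.sin (v T)
        * Real.cos (v T / 2) ^ (k - 2)) T := by
  intro T hT
  subst hk
  convert hasDerivAt_cos_half_pow_mul lam (hv T hT) (hξ T hT) using 1
  rw [cos_half_mul_sub_sin_half_mul_eq, show 2 * (lam + 1) - 2 = 2 * lam by omega,
    sin_eq_two_mul_sin_half_mul_cos_half]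
  ring

/-- Propagation of the identity `x_Y = cos^k(v/2)·ξ`, equation (5.4): if `v, ξ` solve the
last two equations of the semilinear characteristic system (S-1) with source `Pq = P + Q_x`,
then `Z = cos^k(v/2)·ξ` satisfies `Z' = ((λ+1)/2)·u^λ·ξ·sin v·cos^{k−2}(v/2)`. -/
theorem xY_identity_propagation (lam k : ℕ) (hlam : 1 ≤ lam) (hk : k = 2 * (lam + 1))
    (I : Set ℝ) (hI : Set.OrdConnected I)
    (u Pq v ξ : ℝ → ℝ) (hu : ContinuousOn u I) (hPq : ContinuousOn Pq I)
    (hv : ∀ T ∈ I, HasDerivAt v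
      (-(u T) ^ lam * Real.sin (v T / 2) ^ 2 + 2 * (u T) ^ (lam + 2) * Real.cos (v T / 2) ^ 2
        - 2 * Real.cos (v T / 2) ^ 2 * Pq T) T)
    (hξ : ∀ T ∈ I, HasDerivAt ξ
      ((((lam : ℝ) + 1) / 2) * (u T) ^ lam * ξ T * Real.sin (v T)
        + ((lam : ℝ) + 1) * (u T) ^ (lam + 2) * ξ T * Real.sin (v T)
        - ((lam : ℝ) + 1) * ξ T * Real.sin (v T) * Pq T) T) :
    ∀ T ∈ I, HasDerivAt (fun T : ℝ => Real.cos (v T / 2) ^ k * ξ T)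
      ((((lam : ℝ) + 1) / 2) * (u T) ^ lam * ξ T * Real.sin (v T)
        * Real.cos (v T / 2) ^ (k - 2)) T :=
  xY_identity_propagation_general lam k hk I u Pq v ξ hv hξ
end

section
/- Let λ ≥ 1 be an integer, k = 2(λ+1), and let I ⊆ ℝ be an interval. Let u, Π : I → ℝ be continuous and let v, ξ : I → ℝ be differentiable functions satisfying, for all T ∈ I, v'(T) = −u^λ sin²(v/2) + 2u^{λ+2} cos²(v/2) − 2cos²(v/2)·Π and ξ'(T) = ((λ+1)/2) u^λ ξ sin v + (λ+1) u^{λ+2} ξ sin v − (λ+1) ξ sin v · Π. Then the function S(T) := ξ(T)·sin^k(v(T)/2) is differentiable on I with S'(T) = ( u^{λ+2} − Π ) · k · ξ · sin^{k−1}(v/2) · cos(v/2) for all T ∈ I. -/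
/-! With `s = sin (v/2)`, `c = cos (v/2)` and `sin v = 2sc`, the two contributions of the
`u^λ` terms to `(ξ s^k)'` cancel, and those of `u^{λ+2} − Π` add up to a multiple of
`s² + c² = 1`. -/

open Real

theorem hasDerivAt_mul_sin_half_pow {v ξ : ℝ → ℝ} {v' ξ' T : ℝ} (k : ℕ)
    (hv : HasDerivAt v v' T) (hξ : HasDerivAt ξ ξ' T) :
    HasDerivAt (fun t => ξ t * sin (v t / 2) ^ k)
      (ξ' * sin (v T / 2) ^ k
        + ξ T * ((k : ℝ) * sin (v T / 2) ^ (k - 1) * (cos (v T / 2) * (v' / 2)))) T :=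
  hξ.mul ((hv.div_const 2).sin.pow k)

theorem hasDerivAt_mul_sin_half_pow_of_characteristic {v ξ : ℝ → ℝ} {T a b : ℝ} (k : ℕ)
    (hv : HasDerivAt v (-a * sin (v T / 2) ^ 2 + 2 * b * cos (v T / 2) ^ 2) T)
    (hξ : HasDerivAt ξ ((k : ℝ) / 2 * ξ T * sin (v T) * (a / 2 + b)) T) :
    HasDerivAt (fun t => ξ t * sin (v t / 2) ^ k)
      (b * k * ξ T * sin (v T / 2) ^ (k - 1) * cos (v T / 2)) T := by
  refine (hasDerivAt_mul_sin_half_pow k hv hξ).congr_deriv ?_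
  have hsin : sin (v T) = 2 * sin (v T / 2) * cos (v T / 2) := by
    rw [← sin_two_mul]; ring_nf
  rw [hsin]
  rcases k with _ | k
  · simp
  · simp only [Nat.add_sub_cancel, pow_succ]
    push_cast
    linear_combination ((k : ℝ) + 1) * b * ξ T * sin (v T / 2) ^ k * cos (v T / 2)
      * sin_sq_add_cos_sq (v T / 2)

theorem higher_energy_balance_characteristic_general (lam k : ℕ)
    (hk : k = 2 * (lam + 1)) (I : Set ℝ)
    (u Pq v ξ : ℝ → ℝ)
    (hv : ∀ T ∈ I, HasDerivAt v
      (-(u T) ^ lam * Real.sin (v T / 2) ^ 2 + 2 * (u T) ^ (lam + 2) * Real.cos (v T / 2) ^ 2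
        - 2 * Real.cos (v T / 2) ^ 2 * Pq T) T)
    (hξ : ∀ T ∈ I, HasDerivAt ξ
      ((((lam : ℝ) + 1) / 2) * (u T) ^ lam * ξ T * Real.sin (v T)
        + ((lam : ℝ) + 1) * (u T) ^ (lam + 2) * ξ T * Real.sin (v T)
        - ((lam : ℝ) + 1) * ξ T * Real.sin (v T) * Pq T) T) :
    ∀ T ∈ I, HasDerivAt (fun T : ℝ => ξ T * Real.sin (v T / 2) ^ k)
      (((u T) ^ (lam + 2) - Pq T) * (k : ℝ) * ξ T * Real.sin (v T / 2) ^ (k - 1)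
        * Real.cos (v T / 2)) T := by
  intro T hT
  subst hk
  refine hasDerivAt_mul_sin_half_pow_of_characteristic (a := u T ^ lam) _ ?_ ?_
  · exact (hv T hT).congr_deriv (by ring)
  · exact (hξ T hT).congr_deriv (by push_cast; ring)

/-- Pointwise computation (19_2), the higher-order energy balance in characteristic
coordinates: if `v, ξ` solve the last two equations of the semilinear system (S-1) with
source `Pq = P + Q_x`, then `S = ξ·sin^k(v/2)` satisfies
`S' = (u^{λ+2} − Pq)·k·ξ·sin^{k−1}(v/2)·cos(v/2)`. -/
theorem higher_energy_balance_characteristic (lam k : ℕ) (hlam : 1 ≤ lam)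
    (hk : k = 2 * (lam + 1)) (I : Set ℝ) (hI : Set.OrdConnected I)
    (u Pq v ξ : ℝ → ℝ) (hu : ContinuousOn u I) (hPq : ContinuousOn Pq I)
    (hv : ∀ T ∈ I, HasDerivAt v
      (-(u T) ^ lam * Real.sin (v T / 2) ^ 2 + 2 * (u T) ^ (lam + 2) * Real.cos (v T / 2) ^ 2
        - 2 * Real.cos (v T / 2) ^ 2 * Pq T) T)
    (hξ : ∀ T ∈ I, HasDerivAt ξ
      ((((lam : ℝ) + 1) / 2) * (u T) ^ lam * ξ T * Real.sin (v T)
        + ((lam : ℝ) + 1) * (u T) ^ (lam + 2) * ξ T * Real.sin (v T)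
        - ((lam : ℝ) + 1) * ξ T * Real.sin (v T) * Pq T) T) :
    ∀ T ∈ I, HasDerivAt (fun T : ℝ => ξ T * Real.sin (v T / 2) ^ k)
      (((u T) ^ (lam + 2) - Pq T) * (k : ℝ) * ξ T * Real.sin (v T / 2) ^ (k - 1)
        * Real.cos (v T / 2)) T :=
  higher_energy_balance_characteristic_general lam k hk I u Pq v ξ hv hξ
end
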